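/- arXiv:1507.01446 — 3 statements merged into one kernel-verified Lean document; each statement's English description precedes it below -/
import Mathlib

section
/- Let R be an associative unital ring, let a, b, c ∈ R, and suppose both b and c are regular. Set t = c·a·b. Then the following statements are equivalent: (i) a has a (b,c)-inverse; (ii) r(a) ∩ bR = {0} and R = (a·b)R ⊕ r(c) (i.e., every x ∈ R can be written x = a·b·u + v with c·v = 0, and (a·b)R ∩ r(c) = {0}); (iii) r(t) = r(b) and tR = cR; (iv) l(t) = l(c) and Rt = Rb. -/
/-!
Write `t = c * a * b`. By Drazin's criterion, `a` has a `(b,c)`-inverse exactly when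
`b ∈ R t` and `c ∈ t R`; the inverse is then `s * c = b * u` for `b = s * t`, `c = t * u`.
Conditions (ii) and (iii) both amount to `r(t) ⊆ r(b)` together with `c ∈ t R`. When `c` is
regular, `c ∈ t R` makes `t` regular, say `t = t z t`, and then `r(t) ⊆ r(b)` applied to
`z t - 1` gives `b = b z t ∈ R t`. Condition (iv) is the left-right mirror of (iii) and uses the
regularity of `b` in the same way.
-/

/-- `y` is a (b,c)-inverse of `a`. -/
def IsBCInverse {R : Type*} [Ring R] (a b c y : R) : Prop :=
  (∃ r, y = b * r * y) ∧ (∃ s, y = y * s * c) ∧ y * a * b = b ∧ c * a * y = c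

section

variable {R : Type*} [Ring R] {a b c : R}

theorem IsBCInverse.of_eq_mul_of_eq_mul {y u v : R} (hyb : y = b * u) (hyc : y = v * c)
    (hyab : y * a * b = b) (hcay : c * a * y = c) : IsBCInverse a b c y := by
  have hyay : y * a * y = y := by
    calc y * a * y = y * a * (b * u) := by rw [← hyb]
      _ = y * a * b * u := by simp only [mul_assoc]
      _ = y := by rw [hyab, hyb]
  refine ⟨⟨u * a, ?_⟩, ⟨a * v, ?_⟩, hyab, hcay⟩
  · rw [← mul_assoc, ← hyb, hyay]
  · rw [mul_assoc, mul_assoc, ← hyc, ← mul_assoc, hyay]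

/-- Drazin's criterion. -/
theorem exists_isBCInverse_iff :
    (∃ y, IsBCInverse a b c y) ↔ (∃ s, b = s * (c * a * b)) ∧ ∃ u, c = c * a * b * u := by
  constructor
  · rintro ⟨y, ⟨r, hr⟩, ⟨s, hs⟩, hyab, hcay⟩
    refine ⟨⟨y * s, ?_⟩, ⟨r * y, ?_⟩⟩
    · calc b = y * a * b := hyab.symm
        _ = y * s * c * a * b := by rw [← hs]
        _ = y * s * (c * a * b) := by simp only [mul_assoc]
    · calc c = c * a * y := hcay.symm
        _ = c * a * (b * r * y) := by rw [← hr]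
        _ = c * a * b * (r * y) := by simp only [mul_assoc]
  · rintro ⟨⟨s, hs⟩, ⟨u, hu⟩⟩
    have hsc : s * c = b * u := by
      calc s * c = s * (c * a * b * u) := congrArg (s * ·) hu
        _ = s * (c * a * b) * u := (mul_assoc ..).symm
        _ = b * u := by rw [← hs]
    refine ⟨b * u, .of_eq_mul_of_eq_mul rfl hsc.symm ?_ ?_⟩
    · rw [← hsc, mul_assoc, mul_assoc, ← mul_assoc c, ← hs]
    · rw [← mul_assoc, ← hu]

theorem inter_eq_zero_of_eq_mul {s : R} (hs : b = s * (c * a * b)) :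
    {x : R | a * x = 0} ∩ {x | ∃ u, x = b * u} = {0} ∧
      {x | ∃ u, x = a * b * u} ∩ {x | c * x = 0} = {0} := by
  have hb : ∀ x, b * x = s * c * (a * b * x) := fun x => by
    conv_lhs => rw [hs]
    simp only [mul_assoc]
  constructor <;> ext x <;>
    simp only [Set.mem_inter_iff, Set.mem_ofPred_eq, Set.mem_singleton_iff]
  · refine ⟨fun ⟨hax, u, hxu⟩ => ?_, fun hx => ⟨by rw [hx, mul_zero], 0, by rw [hx, mul_zero]⟩⟩
    rw [hxu, hb, mul_assoc a, ← hxu, hax, mul_zero]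
  · refine ⟨fun ⟨⟨u, hxu⟩, hcx⟩ => ?_, fun hx => ⟨⟨0, by rw [hx, mul_zero]⟩, by rw [hx, mul_zero]⟩⟩
    rw [hxu, mul_assoc, hb, mul_assoc, ← hxu, hcx, mul_zero, mul_zero]

theorem exists_eq_mul_add_of_eq_mul {u : R} (hu : c = c * a * b * u) (x : R) :
    ∃ w v, x = a * b * w + v ∧ c * v = 0 :=
  ⟨u * x, x - a * b * (u * x), (add_sub_cancel _ _).symm, by
    rw [mul_sub, ← mul_assoc, ← mul_assoc, ← mul_assoc, ← hu, sub_self]⟩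

theorem mul_eq_zero_of_inter_eq_zero
    (h₁ : {x : R | a * x = 0} ∩ {x | ∃ u, x = b * u} = {0})
    (h₃ : {x | ∃ u, x = a * b * u} ∩ {x | c * x = 0} = {0}) {x : R} (hx : c * a * b * x = 0) :
    b * x = 0 := by
  have habx : a * b * x ∈ {x | ∃ u, x = a * b * u} ∩ {x | c * x = 0} :=
    ⟨⟨x, rfl⟩, show c * (a * b * x) = 0 by simpa only [mul_assoc] using hx⟩
  rw [h₃, Set.mem_singleton_iff] at habx
  have hbx : b * x ∈ {x | a * x = 0} ∩ {x | ∃ u, x = b * u} :=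
    ⟨show a * (b * x) = 0 by rwa [← mul_assoc], x, rfl⟩
  rwa [h₁, Set.mem_singleton_iff] at hbx

theorem exists_eq_mul_of_forall_eq_mul_add (h : ∀ x : R, ∃ u v, x = a * b * u + v ∧ c * v = 0) :
    ∃ w, c = c * a * b * w := by
  obtain ⟨w, v, h1, hcv⟩ := h 1
  refine ⟨w, ?_⟩
  calc c = c * (a * b * w + v) := by rw [← h1, mul_one]
    _ = c * a * b * w := by rw [mul_add, hcv, add_zero]; simp only [mul_assoc]

theorem setOf_mul_eq_zero_eq_and_setOf_eq_mul_eq_iff :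
    ({x : R | c * a * b * x = 0} = {x | b * x = 0} ∧
        {x : R | ∃ u, x = c * a * b * u} = {x | ∃ u, x = c * u}) ↔
      (∀ x, c * a * b * x = 0 → b * x = 0) ∧ ∃ w, c = c * a * b * w := by
  constructor
  · rintro ⟨hann, hran⟩
    refine ⟨fun x hx => (hann ▸ hx : x ∈ {x | b * x = 0}), ?_⟩
    exact (hran ▸ ⟨1, (mul_one c).symm⟩ : c ∈ {x | ∃ u, x = c * a * b * u})
  · rintro ⟨hann, w, hw⟩
    refine ⟨Set.ext fun x => ⟨hann x, fun hx => ?_⟩, Set.ext fun x => ⟨?_, ?_⟩⟩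
    · simp only [Set.mem_ofPred_eq, mul_assoc] at hx ⊢
      rw [hx, mul_zero, mul_zero]
    · rintro ⟨u, rfl⟩
      exact ⟨a * b * u, by simp only [mul_assoc]⟩
    · rintro ⟨u, rfl⟩
      exact ⟨w * u, by rw [← mul_assoc (c * a * b), ← hw]⟩

theorem setOf_mul_eq_zero_eq_and_setOf_eq_mul_eq_iff' :
    ({x : R | x * (c * a * b) = 0} = {x | x * c = 0} ∧
        {x : R | ∃ u, x = u * (c * a * b)} = {x | ∃ u, x = u * b}) ↔
      (∀ x, x * (c * a * b) = 0 → x * c = 0) ∧ ∃ v, b = v * (c * a * b) := by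
  constructor
  · rintro ⟨hann, hran⟩
    refine ⟨fun x hx => (hann ▸ hx : x ∈ {x | x * c = 0}), ?_⟩
    exact (hran ▸ ⟨1, (one_mul b).symm⟩ : b ∈ {x | ∃ u, x = u * (c * a * b)})
  · rintro ⟨hann, v, hv⟩
    refine ⟨Set.ext fun x => ⟨hann x, fun hx => ?_⟩, Set.ext fun x => ⟨?_, ?_⟩⟩
    · simp only [Set.mem_ofPred_eq, ← mul_assoc] at hx ⊢
      rw [hx, zero_mul, zero_mul]
    · rintro ⟨u, rfl⟩
      exact ⟨u * c * a, by simp only [mul_assoc]⟩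
    · rintro ⟨u, rfl⟩
      exact ⟨u * v, by rw [mul_assoc u v, ← hv]⟩

theorem mul_mul_eq_of_forall_mul_eq_zero {t z : R} (ht : t * z * t = t)
    (h : ∀ x, t * x = 0 → b * x = 0) : b * z * t = b := by
  have := h (z * t - 1) (by rw [mul_sub, ← mul_assoc, ht, mul_one, sub_self])
  rwa [mul_sub, mul_one, sub_eq_zero, ← mul_assoc] at this

theorem mul_mul_eq_of_forall_mul_eq_zero' {t z : R} (ht : t * z * t = t)
    (h : ∀ x, x * t = 0 → x * c = 0) : t * z * c = c := by
  have := h (t * z - 1) (by rw [sub_mul, ht, one_mul, sub_self])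
  rwa [sub_mul, one_mul, sub_eq_zero] at this

theorem mul_mul_eq_self_of_eq_mul {t w x γ : R} (hc : c = c * γ * c) (hct : c = t * w)
    (htc : t = c * x) : t * (w * γ) * t = t := by
  calc t * (w * γ) * t = t * w * γ * (c * x) := by rw [← htc]; simp only [mul_assoc]
    _ = t := by rw [← hct, ← mul_assoc, ← hc, ← htc]

theorem mul_mul_eq_self_of_eq_mul' {t v x β : R} (hb : b = b * β * b) (hbt : b = v * t)
    (htb : t = x * b) : t * (β * v) * t = t := by
  calc t * (β * v) * t = x * b * β * (v * t) := by rw [← htb]; simp only [mul_assoc]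
    _ = t := by rw [← hbt, mul_assoc x, mul_assoc x, ← hb, ← htb]

theorem exists_eq_mul_of_forall_mul_eq_zero (hc : ∃ γ, c = c * γ * c)
    (hann : ∀ x, c * a * b * x = 0 → b * x = 0) (hw : ∃ w, c = c * a * b * w) :
    ∃ s, b = s * (c * a * b) := by
  obtain ⟨γ, hγ⟩ := hc
  obtain ⟨w, hw⟩ := hw
  have ht := mul_mul_eq_self_of_eq_mul hγ hw (mul_assoc c a b)
  exact ⟨b * (w * γ), (mul_mul_eq_of_forall_mul_eq_zero ht hann).symm⟩

theorem exists_eq_mul_of_forall_mul_eq_zero' (hb : ∃ β, b = b * β * b)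
    (hann : ∀ x, x * (c * a * b) = 0 → x * c = 0) (hv : ∃ v, b = v * (c * a * b)) :
    ∃ u, c = c * a * b * u := by
  obtain ⟨β, hβ⟩ := hb
  obtain ⟨v, hv⟩ := hv
  have ht := mul_mul_eq_self_of_eq_mul' hβ hv rfl
  exact ⟨β * v * c, by rw [← mul_assoc, mul_mul_eq_of_forall_mul_eq_zero' ht hann]⟩

end

/-- If both `b` and `c` are regular, then (i)–(iv) are equivalent. -/
theorem exists_bc_inverse_tfae_of_regular {R : Type*} [Ring R] (a b c : R)
    (hb : ∃ x, b = b * x * b) (hc : ∃ x, c = c * x * c) :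
    List.TFAE
      [ (∃ y, IsBCInverse a b c y),
        ({x : R | a * x = 0} ∩ {x : R | ∃ u, x = b * u} = {0}) ∧
          (∀ x : R, ∃ u v, x = a * b * u + v ∧ c * v = 0) ∧
          ({x : R | ∃ u, x = a * b * u} ∩ {x : R | c * x = 0} = {0}),
        ({x : R | c * a * b * x = 0} = {x : R | b * x = 0}) ∧
          ({x : R | ∃ u, x = c * a * b * u} = {x : R | ∃ u, x = c * u}),
        ({x : R | x * (c * a * b) = 0} = {x : R | x * c = 0}) ∧
          ({x : R | ∃ u, x = u * (c * a * b)} = {x : R | ∃ u, x = u * b}) ] := by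
  rw [exists_isBCInverse_iff, setOf_mul_eq_zero_eq_and_setOf_eq_mul_eq_iff,
    setOf_mul_eq_zero_eq_and_setOf_eq_mul_eq_iff']
  tfae_have 1 → 2 := fun ⟨⟨s, hs⟩, ⟨u, hu⟩⟩ =>
    ⟨(inter_eq_zero_of_eq_mul hs).1, exists_eq_mul_add_of_eq_mul hu,
      (inter_eq_zero_of_eq_mul hs).2⟩
  tfae_have 2 → 3 := fun ⟨h₁, h₂, h₃⟩ =>
    ⟨fun _ => mul_eq_zero_of_inter_eq_zero h₁ h₃, exists_eq_mul_of_forall_eq_mul_add h₂⟩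
  tfae_have 3 → 1 := fun ⟨hann, hw⟩ => ⟨exists_eq_mul_of_forall_mul_eq_zero hc hann hw, hw⟩
  tfae_have 1 → 4 := fun ⟨hs, u, hu⟩ =>
    ⟨fun x hx => by rw [hu, ← mul_assoc, hx, zero_mul], hs⟩
  tfae_have 4 → 1 := fun ⟨hann, hv⟩ => ⟨hv, exists_eq_mul_of_forall_mul_eq_zero' hb hann hv⟩
  tfae_finish
end

section
/- Let R be an associative unital ring, let a, b, c, y ∈ R, and suppose both b and c are regular. Then the following statements are equivalent: (i) y is the (b,c)-inverse of a; (ii) y is a hybrid (b,c)-inverse of a; (iii) y is an annihilator (b,c)-inverse of a. -/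
/-- `y` is a hybrid (b,c)-inverse of `a`: `y·a·y = y`, `yR = bR`, `r(y) = r(c)`. -/
def IsHybridBCInverse {R : Type*} [Ring R] (a b c y : R) : Prop :=
  y * a * y = y ∧ ({x : R | ∃ u, x = y * u} = {x : R | ∃ u, x = b * u}) ∧
    ({x : R | y * x = 0} = {x : R | c * x = 0})

/-- `y` is an annihilator (b,c)-inverse of `a`: `y·a·y = y`, `l(y) = l(b)`, `r(y) = r(c)`. -/
def IsAnnihilatorBCInverse {R : Type*} [Ring R] (a b c y : R) : Prop :=
  y * a * y = y ∧ ({x : R | x * y = 0} = {x : R | x * b = 0}) ∧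
    ({x : R | y * x = 0} = {x : R | c * x = 0})

/-!
Every condition in the three notions is an equality or inclusion of one-sided ideals or
annihilators, and these are compared through the elementary fact that `l(p) ⊆ l(q)` forces
`z * q = q` whenever `z * p = p` (apply the inclusion to `z - 1`), and dually for right
annihilators. Regularity of `b` and `c` supplies the idempotents `b * x` and `x * c` that
turn the annihilator conditions back into the factorisations `y ∈ bR` and `y ∈ Rc`.
-/

section Monoid

variable {M : Type*} [Monoid M]

theorem setOf_dvd_eq_setOf_dvd_iff {p q : M} :
    {x : M | p ∣ x} = {x : M | q ∣ x} ↔ p ∣ q ∧ q ∣ p := by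
  constructor
  · intro h
    exact ⟨(h ▸ dvd_refl q : q ∈ {x : M | p ∣ x}), (h ▸ dvd_refl p : p ∈ {x : M | q ∣ x})⟩
  · rintro ⟨hpq, hqp⟩
    ext x
    exact ⟨hqp.trans, hpq.trans⟩

end Monoid

section SemigroupWithZero

variable {S : Type*} [SemigroupWithZero S]

theorem leftAnnihilator_subset_of_eq_mul {p q u : S} (h : q = p * u) :
    {w : S | w * p = 0} ⊆ {w : S | w * q = 0} := by
  intro w (hw : w * p = 0)
  show w * q = 0
  rw [h, ← mul_assoc, hw, zero_mul]

theorem rightAnnihilator_subset_of_eq_mul {p q u : S} (h : q = u * p) :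
    {w : S | p * w = 0} ⊆ {w : S | q * w = 0} := by
  intro w (hw : p * w = 0)
  show q * w = 0
  rw [h, mul_assoc, hw, mul_zero]

end SemigroupWithZero

section Ring

variable {R : Type*} [Ring R]

theorem mul_eq_self_of_leftAnnihilator_subset {p q z : R}
    (h : {w : R | w * p = 0} ⊆ {w : R | w * q = 0}) (hz : z * p = p) : z * q = q := by
  have : (z - 1) * q = 0 := h (show (z - 1) * p = 0 by rw [sub_mul, one_mul, hz, sub_self])
  rwa [sub_mul, one_mul, sub_eq_zero] at this

theorem mul_eq_self_of_rightAnnihilator_subset {p q z : R}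
    (h : {w : R | p * w = 0} ⊆ {w : R | q * w = 0}) (hz : p * z = p) : q * z = q := by
  have : q * (z - 1) = 0 := h (show p * (z - 1) = 0 by rw [mul_sub, mul_one, hz, sub_self])
  rwa [mul_sub, mul_one, sub_eq_zero] at this

variable {a b c y : R}

theorem IsBCInverse.isHybridBCInverse (h : IsBCInverse a b c y) : IsHybridBCInverse a b c y := by
  obtain ⟨⟨r, hr⟩, ⟨s, hs⟩, hab, hca⟩ := h
  have hyb : y ∣ b := ⟨a * b, by rw [← mul_assoc, hab]⟩
  have hby : b ∣ y := ⟨r * y, by rw [← mul_assoc, ← hr]⟩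
  refine ⟨?_, setOf_dvd_eq_setOf_dvd_iff.mpr ⟨hyb, hby⟩, ?_⟩
  · calc y * a * y = y * a * (b * r * y) := by rw [← hr]
      _ = y * a * b * r * y := by simp only [mul_assoc]
      _ = y := by rw [hab, ← hr]
  · exact (rightAnnihilator_subset_of_eq_mul (u := c * a) hca.symm).antisymm
      (rightAnnihilator_subset_of_eq_mul hs)

theorem IsHybridBCInverse.isAnnihilatorBCInverse (h : IsHybridBCInverse a b c y) :
    IsAnnihilatorBCInverse a b c y := by
  obtain ⟨hy, hyR, hr⟩ := h
  obtain ⟨⟨u, hu⟩, ⟨v, hv⟩⟩ := setOf_dvd_eq_setOf_dvd_iff.mp hyR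
  exact ⟨hy, (leftAnnihilator_subset_of_eq_mul hu).antisymm
    (leftAnnihilator_subset_of_eq_mul hv), hr⟩

theorem IsAnnihilatorBCInverse.isBCInverse (h : IsAnnihilatorBCInverse a b c y)
    (hb : ∃ x, b = b * x * b) (hc : ∃ x, c = c * x * c) : IsBCInverse a b c y := by
  obtain ⟨hy, hl, hr⟩ := h
  obtain ⟨xb, hxb⟩ := hb
  obtain ⟨xc, hxc⟩ := hc
  refine ⟨⟨xb, ?_⟩, ⟨xc, ?_⟩, ?_, ?_⟩
  · exact (mul_eq_self_of_leftAnnihilator_subset hl.ge hxb.symm).symm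
  · rw [mul_assoc]
    exact (mul_eq_self_of_rightAnnihilator_subset hr.ge (by rw [← mul_assoc, ← hxc])).symm
  · exact mul_eq_self_of_leftAnnihilator_subset hl.le hy
  · rw [mul_assoc]
    exact mul_eq_self_of_rightAnnihilator_subset hr.le (by rw [← mul_assoc, hy])

end Ring

/-- If both `b` and `c` are regular, then the (b,c)-inverse, the hybrid
(b,c)-inverse and the annihilator (b,c)-inverse notions coincide. -/
theorem bc_hybrid_annihilator_tfae_of_regular {R : Type*} [Ring R] (a b c y : R)
    (hb : ∃ x, b = b * x * b) (hc : ∃ x, c = c * x * c) :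
    List.TFAE
      [ IsBCInverse a b c y,
        IsHybridBCInverse a b c y,
        IsAnnihilatorBCInverse a b c y ] := by
  tfae_have 1 → 2 := IsBCInverse.isHybridBCInverse
  tfae_have 2 → 3 := IsHybridBCInverse.isAnnihilatorBCInverse
  tfae_have 3 → 1 := fun h => h.isBCInverse hb hc
  tfae_finish
end

section
/- Let R be an associative unital ring, let a, b, c, d ∈ R, suppose y is the (b,c)-inverse of a and z is the (b,c)-inverse of d, let b⁻, c⁻ ∈ R satisfy b·b⁻·b = b and c·c⁻·c = c, and set e = b·b⁻ and f = c⁻·c. Then (y·d·e + 1 − e)·(z·a·e + 1 − e) = 1, (z·a·e + 1 − e)·(y·d·e + 1 − e) = 1, (f·d·y + 1 − f)·(f·a·z + 1 − f) = 1, and (f·a·z + 1 − f)·(f·d·y + 1 − f) = 1. -/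
theorem IsIdempotentElem.add_one_sub_mul_add_one_sub_eq_one {R : Type*} [Ring R] {e p q : R}
    (he : IsIdempotentElem e) (hpe : p * e = p) (heq : e * q = q) (hpq : p * q = e) :
    (p + 1 - e) * (q + 1 - e) = 1 := by
  have expand : (p + 1 - e) * (q + 1 - e)
      = p * q + (p - p * e) + (q - e * q) + (e * e - e) + 1 - e := by noncomm_ring
  rw [expand, hpe, heq, hpq, he.eq]
  abel

namespace IsBCInverse

variable {R : Type*} [Ring R] {a b c d y z : R}

theorem mul_eq_self_of_mul_left {e : R} (hy : IsBCInverse a b c y) (he : e * b = b) :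
    e * y = y := by
  obtain ⟨⟨r, hr⟩, -⟩ := hy
  rw [hr, ← mul_assoc, ← mul_assoc, he]

theorem mul_eq_self_of_mul_right {f : R} (hy : IsBCInverse a b c y) (hf : c * f = c) :
    y * f = y := by
  obtain ⟨-, ⟨s, hs⟩, -⟩ := hy
  rw [hs, mul_assoc, hf]

theorem mul_mul_eq_left (hy : IsBCInverse a b c y) (hz : IsBCInverse d b c z) :
    y * d * z = y := by
  obtain ⟨-, ⟨s, hs⟩, -⟩ := hy
  conv_lhs => rw [hs]
  rw [mul_assoc, mul_assoc, ← mul_assoc c, hz.2.2.2, ← hs]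

theorem mul_mul_eq_right (hy : IsBCInverse a b c y) (hz : IsBCInverse d b c z) :
    y * a * z = z := by
  obtain ⟨⟨r, hr⟩, -⟩ := hz
  conv_lhs => rw [hr]
  rw [← mul_assoc, ← mul_assoc, hy.2.2.1, ← hr]

theorem add_one_sub_mul_add_one_sub_left (hy : IsBCInverse a b c y)
    (hz : IsBCInverse d b c z) {bm : R} (hbm : b * bm * b = b) :
    (y * d * (b * bm) + 1 - b * bm) * (z * a * (b * bm) + 1 - b * bm) = 1 := by
  have he : IsIdempotentElem (b * bm) := by
    rw [IsIdempotentElem, ← mul_assoc, hbm]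
  have hez : b * bm * z = z := hz.mul_eq_self_of_mul_left hbm
  refine he.add_one_sub_mul_add_one_sub_eq_one (by rw [mul_assoc, he.eq])
    (by simp only [← mul_assoc, hez]) ?_
  calc y * d * (b * bm) * (z * a * (b * bm))
      = y * d * (b * bm * z) * a * b * bm := by noncomm_ring
    _ = b * bm := by rw [hez, hy.mul_mul_eq_left hz, hy.2.2.1]

theorem add_one_sub_mul_add_one_sub_right (hy : IsBCInverse a b c y)
    (hz : IsBCInverse d b c z) {cm : R} (hcm : c * cm * c = c) :
    ((cm * c) * d * y + 1 - cm * c) * ((cm * c) * a * z + 1 - cm * c) = 1 := by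
  have hf : IsIdempotentElem (cm * c) := by
    rw [IsIdempotentElem, mul_assoc, ← mul_assoc c, hcm]
  have hyf : y * (cm * c) = y := hy.mul_eq_self_of_mul_right (by rw [← mul_assoc, hcm])
  refine hf.add_one_sub_mul_add_one_sub_eq_one (by rw [mul_assoc, hyf])
    (by rw [← mul_assoc, ← mul_assoc (cm * c), hf.eq]) ?_
  calc cm * c * d * y * (cm * c * a * z)
      = cm * (c * d * (y * (cm * c) * a * z)) := by noncomm_ring
    _ = cm * c := by rw [hyf, hy.mul_mul_eq_right hz, hz.2.2.2]

end IsBCInverse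

/-- if `y = a^{‖(b,c)}`, `z = d^{‖(b,c)}`, `e = b·b⁻`, `f = c⁻·c`, then
`(y·d·e + 1 - e)` and `(z·a·e + 1 - e)` are mutually inverse, and so are
`(f·d·y + 1 - f)` and `(f·a·z + 1 - f)`. -/
theorem mutual_inverses {R : Type*} [Ring R] (a b c d y z bm cm : R)
    (hy : IsBCInverse a b c y) (hz : IsBCInverse d b c z)
    (hbm : b * bm * b = b) (hcm : c * cm * c = c) :
    (y * d * (b * bm) + 1 - b * bm) * (z * a * (b * bm) + 1 - b * bm) = 1 ∧
    (z * a * (b * bm) + 1 - b * bm) * (y * d * (b * bm) + 1 - b * bm) = 1 ∧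
    ((cm * c) * d * y + 1 - cm * c) * ((cm * c) * a * z + 1 - cm * c) = 1 ∧
    ((cm * c) * a * z + 1 - cm * c) * ((cm * c) * d * y + 1 - cm * c) = 1 :=
  ⟨hy.add_one_sub_mul_add_one_sub_left hz hbm, hz.add_one_sub_mul_add_one_sub_left hy hbm,
    hy.add_one_sub_mul_add_one_sub_right hz hcm, hz.add_one_sub_mul_add_one_sub_right hy hcm⟩
end
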